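/- Let Z be a vector field along a surface in ℍ³_{-κ}. Then Z can be written as Z = Z₀ + κ⟨Z₀, X⟩X for some constant vector field Z₀ (i.e. D̃Z₀ = 0) if and only if DZ = (κ/f²)⟨Z, X⟩ DX. -/

import Mathlib

open Matrix

lemma fderiv_comp_apply' {Y : (Fin 2 → ℝ) → (Fin 3 → ℝ)} {u : Fin 2 → ℝ}
    (hY : DifferentiableAt ℝ Y u) (i : Fin 3) (v : Fin 2 → ℝ) :
    fderiv ℝ (fun w => Y w i) u v = fderiv ℝ Y u v i := by
  have h : ∀ j, DifferentiableAt ℝ (fun w => Y w j) u := differentiableAt_pi.1 hY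
  have h2 : fderiv ℝ Y u = ContinuousLinearMap.pi fun j => fderiv ℝ (fun w => Y w j) u :=
    fderiv_pi (𝕜 := ℝ) (φ := fun j w => Y w j) (x := u) h
  rw [h2]; rfl

lemma contDiff_dot' {Y Z : (Fin 2 → ℝ) → (Fin 3 → ℝ)}
    (hY : ContDiff ℝ (⊤ : ℕ∞) Y) (hZ : ContDiff ℝ (⊤ : ℕ∞) Z) :
    ContDiff ℝ (⊤ : ℕ∞) (fun w => Y w ⬝ᵥ Z w) := by
  simp only [dotProduct]
  exact ContDiff.sum fun i _ => ((contDiff_pi.1 hY i).mul (contDiff_pi.1 hZ i))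

lemma fderiv_dot' {Y Z : (Fin 2 → ℝ) → (Fin 3 → ℝ)} {u : Fin 2 → ℝ}
    (hY : DifferentiableAt ℝ Y u) (hZ : DifferentiableAt ℝ Z u) (v : Fin 2 → ℝ) :
    fderiv ℝ (fun w => Y w ⬝ᵥ Z w) u v = fderiv ℝ Y u v ⬝ᵥ Z u + Y u ⬝ᵥ fderiv ℝ Z u v := by
  have hYc := differentiableAt_pi.1 hY
  have hZc := differentiableAt_pi.1 hZ
  simp only [dotProduct]
  rw [fderiv_fun_sum (A := fun i w => Y w i * Z w i) (fun i _ => (hYc i).mul (hZc i))]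
  rw [ContinuousLinearMap.sum_apply, ← Finset.sum_add_distrib]
  refine Finset.sum_congr rfl fun i _ => ?_
  rw [fderiv_fun_mul (hYc i) (hZc i)]
  simp [fderiv_comp_apply' hY, fderiv_comp_apply' hZ]; ring

set_option maxHeartbeats 1600000 in
/-- Setup as before on a surface in `ℍ³₋κ`: pull-back tangent bundle trivialized over a
coordinate chart, pull-back metric connection `D_a Z = ∂_a Z + ω_a ×₃ Z`, coordinate
tangent images `R a = dr(∂_a)`, static potential `f` with `Df = κX` and
`κ|X|² = f² − 1`, conformal Killing field `X` with `D_a X = f R a`, and twist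
connection `D̃_a Z = D_a Z + (κ/f)⟨R a, Z⟩X`.  A vector field `Z` along the surface can
be written as `Z = Z₀ + κ⟨Z₀,X⟩X` for some constant vector field `Z₀` (i.e. `D̃Z₀ = 0`)
if and only if `DZ = (κ/f²)⟨Z,X⟩ DX`. -/
theorem stmt_8 (κ : ℝ)
    (W : (Fin 2 → ℝ) → Matrix (Fin 3) (Fin 2) ℝ)
    (R : Fin 2 → (Fin 2 → ℝ) → (Fin 3 → ℝ))
    (f : (Fin 2 → ℝ) → ℝ) (X Z : (Fin 2 → ℝ) → (Fin 3 → ℝ))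
    (hW : ∀ i j, ContDiff ℝ (⊤ : ℕ∞) fun u => W u i j)
    (hR : ∀ a, ContDiff ℝ (⊤ : ℕ∞) (R a))
    (hfs : ContDiff ℝ (⊤ : ℕ∞) f) (hfpos : ∀ u, 0 < f u)
    (hXs : ContDiff ℝ (⊤ : ℕ∞) X) (hZs : ContDiff ℝ (⊤ : ℕ∞) Z) :
    let D : Fin 2 → ((Fin 2 → ℝ) → (Fin 3 → ℝ)) → (Fin 2 → ℝ) → (Fin 3 → ℝ) :=
      fun a Z' u => fderiv ℝ Z' u (Pi.single a 1) + (W u *ᵥ Pi.single a 1) ⨯₃ Z' u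
    let Dt : Fin 2 → ((Fin 2 → ℝ) → (Fin 3 → ℝ)) → (Fin 2 → ℝ) → (Fin 3 → ℝ) :=
      fun a Z' u => D a Z' u + ((κ / f u) * (R a u ⬝ᵥ Z' u)) • X u
    -- gradient of the static potential: Df = κX
    (∀ u a, fderiv ℝ f u (Pi.single a 1) = κ * (X u ⬝ᵥ R a u)) →
    -- X is conformal Killing: D_a X = f R a
    (∀ u a, D a X u = f u • R a u) →
    -- κ|X|² = f² − 1
    (∀ u, κ * (X u ⬝ᵥ X u) = (f u) ^ 2 - 1) →
    -- conclusion
    ((∃ Z₀ : (Fin 2 → ℝ) → (Fin 3 → ℝ), (∀ u a, Dt a Z₀ u = 0) ∧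
        ∀ u, Z u = Z₀ u + (κ * (Z₀ u ⬝ᵥ X u)) • X u) ↔
      (∀ u a, D a Z u = ((κ / (f u) ^ 2) * (Z u ⬝ᵥ X u)) • D a X u)) := by
  intro D Dt hdf hDX hX2
  have hD : ∀ a (Z' : (Fin 2 → ℝ) → (Fin 3 → ℝ)) u,
      D a Z' u = fderiv ℝ Z' u (Pi.single a 1) + (W u *ᵥ Pi.single a 1) ⨯₃ Z' u :=
    fun _ _ _ => rfl
  have hDt : ∀ a (Z' : (Fin 2 → ℝ) → (Fin 3 → ℝ)) u,
      Dt a Z' u = D a Z' u + ((κ / f u) * (R a u ⬝ᵥ Z' u)) • X u := fun _ _ _ => rfl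
  have hfd : Differentiable ℝ f := hfs.differentiable (by simp)
  have hXd : Differentiable ℝ X := hXs.differentiable (by simp)
  have hZd : Differentiable ℝ Z := hZs.differentiable (by simp)
  have hfne : ∀ u, f u ≠ 0 := fun u => (hfpos u).ne'
  have hne2 : ∀ u, f u ^ 2 ≠ 0 := fun u => pow_ne_zero 2 (hfne u)
  set g : (Fin 2 → ℝ) → ℝ := fun u => κ / f u ^ 2 * (Z u ⬝ᵥ X u) with hgdef
  set W₀ : (Fin 2 → ℝ) → (Fin 3 → ℝ) := fun u => Z u - g u • X u with hW₀def
  have hdotd : Differentiable ℝ (fun w => Z w ⬝ᵥ X w) :=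
    (contDiff_dot' hZs hXs).differentiable (by simp)
  have hinvd : Differentiable ℝ (fun w => (f w ^ 2)⁻¹) :=
    fun u => ((hfd u).pow 2).inv (hne2 u)
  have hgrw : g = fun w => κ * (f w ^ 2)⁻¹ * (Z w ⬝ᵥ X w) := by
    funext w; show κ / f w ^ 2 * (Z w ⬝ᵥ X w) = _; rw [div_eq_mul_inv]
  have hgd : Differentiable ℝ g := by
    rw [hgrw]; exact ((hinvd.const_mul κ).mul hdotd)
  have hW₀d : Differentiable ℝ W₀ := hZd.sub (hgd.smul hXd)
  -- derivative of (f²)⁻¹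
  have hinv : ∀ u v, fderiv ℝ (fun w => (f w ^ 2)⁻¹) u v
      = -(2 * f u * fderiv ℝ f u v) / (f u ^ 2) ^ 2 := by
    intro u v
    have hsq : fderiv ℝ (fun w => f w ^ 2) u v = 2 * f u * fderiv ℝ f u v := by
      have h : (fun w => f w ^ 2) = fun w => f w * f w := by funext w; ring
      rw [h, fderiv_fun_mul (hfd u) (hfd u)]; simp; ring
    have hcomp := fderiv_comp (𝕜 := ℝ) (g := fun y : ℝ => y⁻¹) (f := fun w => f w ^ 2) u (differentiableAt_inv (hne2 u)) ((hfd u).pow 2)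
    rw [show (fun w => (f w ^ 2)⁻¹) = (fun y : ℝ => y⁻¹) ∘ (fun w => f w ^ 2) from rfl, hcomp]
    rw [ContinuousLinearMap.comp_apply, fderiv_inv]
    simp [hsq]; ring
  -- derivative of g
  have hgderiv : ∀ u v, fderiv ℝ g u v
      = κ * (f u ^ 2)⁻¹ * (fderiv ℝ Z u v ⬝ᵥ X u + Z u ⬝ᵥ fderiv ℝ X u v)
        + (Z u ⬝ᵥ X u) * (κ * (-(2 * f u * fderiv ℝ f u v) / (f u ^ 2) ^ 2)) := by
    intro u v
    rw [hgrw]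
    rw [fderiv_fun_mul ((hinvd u).const_mul κ) (hdotd u)]
    rw [ContinuousLinearMap.add_apply]
    simp only [ContinuousLinearMap.smul_apply, smul_eq_mul]
    rw [fderiv_dot' (hZd u) (hXd u), fderiv_const_mul (hinvd u) κ]
    simp only [ContinuousLinearMap.smul_apply, smul_eq_mul]
    rw [hinv u v]
  -- derivative of W₀
  have hW₀deriv : ∀ u v, fderiv ℝ W₀ u v
      = fderiv ℝ Z u v - (g u • fderiv ℝ X u v + fderiv ℝ g u v • X u) := by
    intro u v
    rw [hW₀def]
    rw [fderiv_fun_sub (g := fun y => g y • X y) (hZd u) ((hgd u).smul (hXd u)), fderiv_fun_smul (hgd u) (hXd u)]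
    simp [ContinuousLinearMap.sub_apply, ContinuousLinearMap.add_apply,
      ContinuousLinearMap.smul_apply, ContinuousLinearMap.smulRight_apply]
  -- THE KEY IDENTITY
  have key : ∀ u a, Dt a W₀ u = (D a Z u - g u • D a X u)
      - (κ / f u ^ 2 * ((D a Z u - g u • D a X u) ⬝ᵥ X u)) • X u := by
    intro u a
    have hdx : fderiv ℝ X u (Pi.single a 1)
        = f u • R a u - (W u *ᵥ Pi.single a 1) ⨯₃ X u := by
      have h := hDX u a; rw [hD] at h; exact eq_sub_of_add_eq h
    rw [hDt, hD, hD, hD, hW₀deriv u (Pi.single a 1), hgderiv u (Pi.single a 1), hdx,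
      hdf u a]
    simp only [hW₀def, hgdef]
    have hp : f u ≠ 0 := hfne u
    set p := f u with hpdef
    set x := X u with hxdef
    set z := Z u with hzdef
    set r := R a u with hrdef
    set ω := W u *ᵥ Pi.single a 1 with hwdef
    set dz := fderiv ℝ Z u (Pi.single a 1) with hdzdef
    clear_value p x z r ω dz
    funext i
    fin_cases i <;>
    · simp [crossProduct, dotProduct, Fin.sum_univ_three, Matrix.vecHead, Matrix.vecTail]
      field_simp
      ring
  -- the canonical constant field satisfies the reconstruction identity
  have hWdot : ∀ u, κ * (W₀ u ⬝ᵥ X u) = g u := by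
    intro u
    have hx2 := hX2 u
    have hp := hfne u
    simp only [hW₀def, hgdef, sub_dotProduct, smul_dotProduct, smul_eq_mul]
    simp only [dotProduct, Fin.sum_univ_three] at hx2 ⊢
    field_simp
    linear_combination (-(κ * (Z u 0 * X u 0 + Z u 1 * X u 1 + Z u 2 * X u 2))) * hx2
  have hrecon : ∀ u, Z u = W₀ u + (κ * (W₀ u ⬝ᵥ X u)) • X u := by
    intro u
    rw [hWdot u]
    show Z u = (Z u - g u • X u) + g u • X u
    abel
  constructor
  · -- forward direction
    rintro ⟨Z₀, hDt0, hZeq⟩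
    -- Z₀ agrees with the canonical W₀
    have hZ₀W : Z₀ = W₀ := by
      funext u
      have h1 : Z u ⬝ᵥ X u = (Z₀ u ⬝ᵥ X u) * f u ^ 2 := by
        rw [hZeq u]
        simp only [add_dotProduct, smul_dotProduct, smul_eq_mul]
        linear_combination (Z₀ u ⬝ᵥ X u) * hX2 u
      have e : κ * (Z₀ u ⬝ᵥ X u) = g u := by
        have hp := hfne u
        simp only [hgdef]
        rw [h1]
        field_simp
      have e2 : Z₀ u = Z u - (κ * (Z₀ u ⬝ᵥ X u)) • X u := eq_sub_of_add_eq (hZeq u).symm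
      rw [e2, e]
    rw [hZ₀W] at hDt0
    intro u a
    have h0 := (hDt0 u a).symm.trans (key u a)
    -- 0 = V - c • X
    have hV : (D a Z u - g u • D a X u)
        = (κ / f u ^ 2 * ((D a Z u - g u • D a X u) ⬝ᵥ X u)) • X u :=
      (sub_eq_zero.mp h0.symm)
    have hs : (D a Z u - g u • D a X u) ⬝ᵥ X u
        = κ / f u ^ 2 * ((D a Z u - g u • D a X u) ⬝ᵥ X u) * (X u ⬝ᵥ X u) := by
      conv_lhs => rw [hV]
      rw [smul_dotProduct]; rfl
    have hs0 : (D a Z u - g u • D a X u) ⬝ᵥ X u = 0 := by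
      have hx2 := hX2 u
      have hp := hfne u
      have h4 : ((D a Z u - g u • D a X u) ⬝ᵥ X u) * f u ^ 2
          = ((D a Z u - g u • D a X u) ⬝ᵥ X u) * f u ^ 2
            - ((D a Z u - g u • D a X u) ⬝ᵥ X u) := by
        calc ((D a Z u - g u • D a X u) ⬝ᵥ X u) * f u ^ 2
            = (κ / f u ^ 2 * ((D a Z u - g u • D a X u) ⬝ᵥ X u) * (X u ⬝ᵥ X u)) * f u ^ 2 := by
              rw [← hs]
          _ = κ * ((D a Z u - g u • D a X u) ⬝ᵥ X u) * (X u ⬝ᵥ X u) := by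
              field_simp
          _ = ((D a Z u - g u • D a X u) ⬝ᵥ X u) * (f u ^ 2 - 1) := by
              linear_combination ((D a Z u - g u • D a X u) ⬝ᵥ X u) * hx2
          _ = ((D a Z u - g u • D a X u) ⬝ᵥ X u) * f u ^ 2
              - ((D a Z u - g u • D a X u) ⬝ᵥ X u) := by ring
      linarith
    have hV0 : D a Z u - g u • D a X u = 0 := by
      rw [hV, hs0]; simp
    have := sub_eq_zero.mp hV0
    simpa [hgdef] using this
  · -- reverse direction
    intro h
    refine ⟨W₀, fun u a => ?_, hrecon⟩
    have hDZ : D a Z u = g u • D a X u := h u a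
    rw [key u a, hDZ]
    simp
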